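/- arXiv:2512.20055 — 8 statements merged into one kernel-verified Lean document; each statement's English description precedes it below -/
import Mathlib

section
/- Let z > 0 be a fixed real number. Then there exists a constant C = C(z) > 0 such that for all real X ≥ 2, ∑_{m ≤ X} z^{ω(m)}/m ≤ C·(log X)^z, where the sum is over positive integers m ≤ X. -/
/-!
Multiplicativity of `m ↦ z ^ ω(m) / m` bounds the sum over `m ≤ N` by the Euler product
`∏_{p ≤ N} (1 + z / (p - 1)) ≤ exp (z ∑_{p ≤ N} 1 / (p - 1))`, and since `∑ 1 / (p (p - 1))`
converges, Mertens' estimate `∑_{p ≤ N} 1 / p ≤ log log N + O(1)` turns this into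
`O((log N) ^ z)`. Mertens' estimate follows by partial summation against `1 / log` from
`∑_{p ≤ n} log p / p ≤ log n + log 4`, which compares Legendre's formula for `log n!` with
Chebyshev's bound `θ(n) ≤ n log 4`.
-/

open Finset Real

theorem Nat.div_le_factorization_factorial {p : ℕ} (hp : p.Prime) (n : ℕ) :
    n / p ≤ n.factorial.factorization p := by
  rw [Nat.factorization_factorial hp (Nat.lt_add_of_pos_right two_pos : Nat.log p n < _ + 2)]
  simpa using single_le_sum (f := fun i => n / p ^ i) (fun _ _ => Nat.zero_le _)
    (mem_Ico.mpr ⟨le_rfl, by omega⟩ : 1 ∈ Ico 1 (Nat.log p n + 2))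

theorem sum_primesLE_div_mul_log_le_log_factorial (n : ℕ) :
    ∑ p ∈ n.primesLE, ((n / p : ℕ) : ℝ) * log p ≤ log n.factorial := by
  have hsupp : n.factorial.factorization.support ⊆ n.primesLE := fun p hp => by
    rw [Nat.support_factorization, Nat.mem_primeFactors] at hp
    exact Nat.mem_primesLE.mpr ⟨(hp.1.dvd_factorial).mp hp.2.1, hp.1⟩
  rw [Real.log_nat_eq_sum_factorization, Finsupp.sum_of_support_subset _ hsupp _ (by simp)]
  refine sum_le_sum fun p hp => ?_
  have hp := (Nat.mem_primesLE.mp hp).2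
  exact mul_le_mul_of_nonneg_right (by exact_mod_cast Nat.div_le_factorization_factorial hp n)
    (log_nonneg (by exact_mod_cast hp.one_le))

theorem sum_primesLE_log_div_le_log_add (n : ℕ) :
    ∑ p ∈ n.primesLE, log p / (p : ℝ) ≤ log n + log 4 := by
  rcases n.eq_zero_or_pos with rfl | hn
  · simp [Nat.primesLE_zero, log_nonneg]
  have hn' : (0 : ℝ) < n := by exact_mod_cast hn
  have hfloor : ∀ p ∈ n.primesLE,
      (n : ℝ) * (log p / (p : ℝ)) ≤ ((n / p : ℕ) : ℝ) * log p + log p := by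
    intro p hp
    have hp := (Nat.mem_primesLE.mp hp).2
    have hp0 : (0 : ℝ) < p := by exact_mod_cast hp.pos
    have hdiv : (n : ℝ) / p ≤ ((n / p : ℕ) : ℝ) + 1 := by
      rw [div_le_iff₀ hp0]
      exact_mod_cast (Nat.lt_div_mul_add hp.pos).le.trans_eq (add_one_mul (n / p) p).symm
    calc (n : ℝ) * (log p / (p : ℝ)) = (n : ℝ) / p * log p := by ring
      _ ≤ (((n / p : ℕ) : ℝ) + 1) * log p :=
        mul_le_mul_of_nonneg_right hdiv (log_nonneg (by exact_mod_cast hp.one_le))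
      _ = _ := by ring
  have hfact : log n.factorial ≤ n * log n := by
    rw [← log_pow]
    exact log_le_log (by positivity) (by exact_mod_cast Nat.factorial_le_pow n)
  have htheta : ∑ p ∈ n.primesLE, log p ≤ log 4 * n := by
    rw [← Chebyshev.theta_eq_sum_primesLE_log]
    exact Chebyshev.theta_le_log4_mul_x hn'.le
  suffices (n : ℝ) * ∑ p ∈ n.primesLE, log p / (p : ℝ) ≤ n * (log n + log 4) from
    le_of_mul_le_mul_left this hn'
  calc (n : ℝ) * ∑ p ∈ n.primesLE, log p / (p : ℝ)
      ≤ ∑ p ∈ n.primesLE, (((n / p : ℕ) : ℝ) * log p + log p) := by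
        rw [mul_sum]
        exact sum_le_sum hfloor
    _ ≤ n * log n + log 4 * n := by
        rw [sum_add_distrib]
        exact add_le_add ((sum_primesLE_div_mul_log_le_log_factorial n).trans hfact) htheta
    _ = n * (log n + log 4) := by ring

theorem one_sub_div_le_log_sub_log {u v : ℝ} (hu : 0 < u) (hv : 0 < v) :
    1 - u / v ≤ log v - log u := by
  simpa [inv_div, log_div hv.ne' hu.ne'] using one_sub_inv_le_log_of_pos (div_pos hv hu)

theorem sum_range_mul_eq_by_parts {R : Type*} [CommRing R] {a : ℕ → R} (w : ℕ → R) {N : ℕ}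
    (hN : 2 ≤ N) (ha₀ : a 0 = 0) (ha₁ : a 1 = 0) :
    ∑ n ∈ range (N + 1), w n * a n = w N * ∑ n ∈ range (N + 1), a n
      + ∑ i ∈ Ico 2 N, (w i - w (i + 1)) * ∑ n ∈ range (i + 1), a n := by
  have h := sum_Ico_by_parts w a (show 2 < N + 1 by omega)
  have hA₁ : ∑ i ∈ range 2, a i = 0 := by simp [sum_range_succ, ha₀, ha₁]
  have hwA₁ : ∑ i ∈ range 2, w i * a i = 0 := by simp [sum_range_succ, ha₀, ha₁]
  rw [hA₁, Nat.add_sub_cancel, smul_zero, sub_zero] at h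
  rw [← sum_range_add_sum_Ico _ (by omega : 2 ≤ N + 1), hwA₁, zero_add]
  simp only [smul_eq_mul] at h
  rw [h, sub_eq_add_neg, ← sum_neg_distrib]
  congr 1
  exact sum_congr rfl fun i _ => by ring

theorem sum_range_div_log_le_log_log_add {a : ℕ → ℝ} {c : ℝ} {N : ℕ} (hN : 2 ≤ N) (ha₀ : a 0 = 0)
    (ha₁ : a 1 = 0) (hA : ∀ m ∈ Icc 2 N, ∑ n ∈ range (m + 1), a n ≤ log m + c) :
    ∑ n ∈ range (N + 1), a n / log n ≤ log (log N) + (1 + c / log 2 - log (log 2)) := by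
  set w : ℕ → ℝ := fun n => (log n)⁻¹ with hw
  set A : ℕ → ℝ := fun m => ∑ n ∈ range (m + 1), a n
  have hlog_pos : ∀ n : ℕ, 2 ≤ n → 0 < log n := fun n hn => log_pos (by exact_mod_cast hn)
  have hparts : ∑ n ∈ range (N + 1), a n / log n
      = w N * A N + ∑ i ∈ Ico 2 N, (w i - w (i + 1)) * A i := by
    simpa only [div_eq_inv_mul] using sum_range_mul_eq_by_parts w hN ha₀ ha₁
  have hw_pos : ∀ n : ℕ, 2 ≤ n → 0 < w n := fun n hn => inv_pos.mpr (hlog_pos n hn)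
  have hlead : w N * A N ≤ 1 + c * w N := by
    calc w N * A N ≤ w N * (log N + c) :=
          mul_le_mul_of_nonneg_left (hA N (mem_Icc.mpr ⟨hN, le_rfl⟩)) (hw_pos N hN).le
      _ = 1 + c * w N := by
          simp only [hw]
          field_simp [(hlog_pos N hN).ne']
  have hstep : ∀ i ∈ Ico 2 N, (w i - w (i + 1)) * A i
      ≤ (log (log (i + 1 : ℕ)) - log (log i)) + c * (w i - w (i + 1)) := by
    intro i hi
    obtain ⟨hi₂, hiN⟩ := mem_Ico.mp hi
    have hlog_i := hlog_pos i hi₂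
    have hlog_succ := hlog_pos (i + 1) (by omega)
    have hdecr : 0 ≤ w i - w (i + 1) := sub_nonneg.mpr <|
      inv_anti₀ hlog_i (log_le_log (by positivity) (by exact_mod_cast i.le_succ))
    calc (w i - w (i + 1)) * A i ≤ (w i - w (i + 1)) * (log i + c) :=
          mul_le_mul_of_nonneg_left (hA i (mem_Icc.mpr ⟨hi₂, hiN.le⟩)) hdecr
      _ = (1 - log i / log (i + 1 : ℕ)) + c * (w i - w (i + 1)) := by
          simp only [hw]
          field_simp
      _ ≤ _ := add_le_add_left (one_sub_div_le_log_sub_log hlog_i hlog_succ) _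
  have htele : ∑ i ∈ Ico 2 N, ((log (log (i + 1 : ℕ)) - log (log i)) + c * (w i - w (i + 1)))
      = (log (log N) - log (log 2)) + c * (w 2 - w N) := by
    rw [sum_add_distrib, ← mul_sum, sum_Ico_sub (fun n : ℕ => log (log n)) hN,
      ← neg_sub (w N), ← sum_Ico_sub w hN, ← sum_neg_distrib]
    simp only [neg_sub, Nat.cast_ofNat]
  have hw₂ : c * w 2 = c / log 2 := by simp [hw, div_eq_mul_inv]
  rw [hparts]
  linarith [sum_le_sum hstep]

theorem sum_primesLE_inv_le_log_log_add {N : ℕ} (hN : 2 ≤ N) :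
    ∑ p ∈ N.primesLE, (p : ℝ)⁻¹ ≤ log (log N) + (3 - log (log 2)) := by
  set a : ℕ → ℝ := fun n => if n.Prime then log n / n else 0
  have hsum_a : ∀ m, ∑ n ∈ range (m + 1), a n = ∑ p ∈ m.primesLE, log p / (p : ℝ) :=
    fun m => (sum_filter _ _).symm
  have hsum_div : ∑ n ∈ range (N + 1), a n / log n = ∑ p ∈ N.primesLE, (p : ℝ)⁻¹ := by
    rw [Nat.primesLE_eq_filter_range, sum_filter]
    refine sum_congr rfl fun n _ => ?_
    by_cases hn : n.Prime
    · have hlog : log n ≠ 0 := (log_pos (by exact_mod_cast hn.one_lt)).ne'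
      simp only [a, if_pos hn]
      field_simp
    · simp [a, hn]
  have hlog4 : log 4 / log 2 = 2 := by
    rw [show (4 : ℝ) = 2 ^ 2 by norm_num, log_pow]
    field_simp [(log_pos one_lt_two).ne']
    norm_num
  have h := sum_range_div_log_le_log_log_add (a := a) (c := log 4) hN (by simp [a]) (by simp [a])
    fun m _ => by rw [hsum_a]; exact sum_primesLE_log_div_le_log_add m
  rw [hsum_div, hlog4] at h
  linarith

theorem sum_primesLE_inv_sub_one_le (N : ℕ) :
    ∑ p ∈ N.primesLE, ((p : ℝ) - 1)⁻¹ ≤ ∑ p ∈ N.primesLE, (p : ℝ)⁻¹ + 1 := by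
  have hsub : N.primesLE ⊆ Ico 2 (N + 2) := fun p hp => by
    obtain ⟨hpN, hp⟩ := Nat.mem_primesLE.mp hp
    exact mem_Ico.mpr ⟨hp.two_le, by omega⟩
  have hgap : ∀ n ∈ Ico 2 (N + 2), 0 ≤ ((n : ℝ) - 1)⁻¹ - (n : ℝ)⁻¹ := fun n hn => by
    have : (2 : ℝ) ≤ n := by exact_mod_cast (mem_Ico.mp hn).1
    exact sub_nonneg.mpr (inv_anti₀ (by linarith) (by linarith))
  have htele : ∑ n ∈ Ico 2 (N + 2), (((n : ℝ) - 1)⁻¹ - (n : ℝ)⁻¹) = 1 - ((N : ℝ) + 1)⁻¹ := by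
    have h := sum_Ico_sub (fun n : ℕ => -((n : ℝ) - 1)⁻¹) (show 2 ≤ N + 2 by omega)
    convert h using 1
    · exact sum_congr rfl fun n _ => by push_cast; ring
    · push_cast; ring
  have := (sum_le_sum_of_subset_of_nonneg hsub fun n hn _ => hgap n hn).trans_eq htele
  rw [sum_sub_distrib] at this
  linarith [inv_nonneg.mpr (by positivity : (0 : ℝ) ≤ N + 1)]

theorem sum_Icc_le_prod_primesLE_tsum {f : ℕ → ℝ} (hf₀ : ∀ n, 0 ≤ f n) (hf₁ : f 1 = 1)
    (hmul : ∀ {m n : ℕ}, m.Coprime n → f (m * n) = f m * f n)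
    (hsum : ∀ {p : ℕ}, p.Prime → Summable fun e => f (p ^ e)) (N : ℕ) :
    ∑ m ∈ Icc 1 N, f m ≤ ∏ p ∈ N.primesLE, ∑' e, f (p ^ e) := by
  have hsum_norm : ∀ {p : ℕ}, p.Prime → Summable fun e => ‖f (p ^ e)‖ := fun hp => by
    simpa [Real.norm_of_nonneg (hf₀ _)] using hsum hp
  have hEuler := (EulerProduct.summable_and_hasSum_smoothNumbers_prod_primesBelow_tsum
    hf₁ hmul hsum_norm (N + 1)).2
  have hsmooth : ∀ m ∈ Icc 1 N, m ∈ (N + 1).smoothNumbers := fun m hm => by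
    obtain ⟨h₁, h₂⟩ := mem_Icc.mp hm
    exact Nat.mem_smoothNumbers_of_lt (by omega) (by omega)
  calc ∑ m ∈ Icc 1 N, f m = ∑ m ∈ (Icc 1 N).subtype (· ∈ (N + 1).smoothNumbers), f m := by
        rw [sum_subtype_eq_sum_filter, filter_true_of_mem hsmooth]
    _ ≤ _ := sum_le_hasSum _ (fun _ _ => hf₀ _) hEuler

theorem pow_card_primeFactors_mul_div {z : ℝ} {m n : ℕ} (h : m.Coprime n) :
    z ^ (m * n).primeFactors.card / ((m * n : ℕ) : ℝ)
      = z ^ m.primeFactors.card / (m : ℝ) * (z ^ n.primeFactors.card / (n : ℝ)) := by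
  rw [h.primeFactors_mul, card_union_of_disjoint h.disjoint_primeFactors, pow_add, Nat.cast_mul,
    mul_div_mul_comm]

theorem hasSum_pow_card_primeFactors_prime_pow_div {z : ℝ} {p : ℕ} (hp : p.Prime) :
    HasSum (fun e => z ^ (p ^ e).primeFactors.card / ((p ^ e : ℕ) : ℝ)) (1 + z / (p - 1)) := by
  have hp₁ : (1 : ℝ) < p := by exact_mod_cast hp.one_lt
  have hgeom := (hasSum_geometric_of_lt_one (by positivity) (inv_lt_one_of_one_lt₀ hp₁)).mul_left
    (z / p)
  rw [show z / p * (1 - (p : ℝ)⁻¹)⁻¹ = z / (p - 1) by field_simp] at hgeom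
  refine (hasSum_nat_add_iff' 1).mp ?_
  simp only [sum_range_one, pow_zero, Nat.primeFactors_one, card_empty, Nat.cast_one, div_one,
    add_sub_cancel_left]
  refine hgeom.congr_fun fun e => ?_
  rw [Nat.primeFactors_prime_pow (Nat.succ_ne_zero e) hp, card_singleton, pow_one, Nat.cast_pow,
    pow_succ, inv_pow]
  field_simp

theorem sum_Icc_pow_card_primeFactors_div_le_prod {z : ℝ} (hz : 0 ≤ z) (N : ℕ) :
    ∑ m ∈ Icc 1 N, z ^ m.primeFactors.card / (m : ℝ) ≤ ∏ p ∈ N.primesLE, (1 + z / (p - 1)) := by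
  refine (sum_Icc_le_prod_primesLE_tsum (f := fun m => z ^ m.primeFactors.card / (m : ℝ))
    (by intro n; positivity) (by simp)
    pow_card_primeFactors_mul_div
    (fun hp => (hasSum_pow_card_primeFactors_prime_pow_div hp).summable) N).trans_eq ?_
  exact prod_congr rfl fun p hp =>
    (hasSum_pow_card_primeFactors_prime_pow_div (Nat.mem_primesLE.mp hp).2).tsum_eq

/-- Lemma 2.1: for fixed `z > 0`, `∑_{m ≤ X} z^{ω(m)}/m ≪_z (log X)^z`. -/
theorem harmonic_omega_sum_bound (z : ℝ) (hz : 0 < z) :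
    ∃ C : ℝ, 0 < C ∧ ∀ X : ℝ, 2 ≤ X →
      ∑ m ∈ Finset.Icc 1 ⌊X⌋₊, z ^ m.primeFactors.card / (m : ℝ)
        ≤ C * (Real.log X) ^ z := by
  refine ⟨exp (z * (4 - log (log 2))), exp_pos _, fun X hX => ?_⟩
  set N := ⌊X⌋₊
  have hN : 2 ≤ N := Nat.le_floor (by exact_mod_cast hX)
  have hlogX : 0 < log X := log_pos (by linarith)
  have hloglog : log (log N) ≤ log (log X) :=
    log_le_log (log_pos (by exact_mod_cast hN))
      (log_le_log (by positivity) (Nat.floor_le (by linarith)))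
  have hprimes : ∑ p ∈ N.primesLE, ((p : ℝ) - 1)⁻¹ ≤ log (log X) + (4 - log (log 2)) := by
    linarith [sum_primesLE_inv_sub_one_le N, sum_primesLE_inv_le_log_log_add hN]
  calc ∑ m ∈ Icc 1 N, z ^ m.primeFactors.card / (m : ℝ)
      ≤ ∏ p ∈ N.primesLE, (1 + z / (p - 1)) := sum_Icc_pow_card_primeFactors_div_le_prod hz.le N
    _ ≤ ∏ p ∈ N.primesLE, exp (z * ((p : ℝ) - 1)⁻¹) := by
        refine prod_le_prod (fun p hp => ?_) fun p _ => by
          rw [← div_eq_mul_inv, add_comm]; exact add_one_le_exp _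
        have : (1 : ℝ) < p := by exact_mod_cast (Nat.mem_primesLE.mp hp).2.one_lt
        have : 0 < (p : ℝ) - 1 := by linarith
        positivity
    _ = exp (z * ∑ p ∈ N.primesLE, ((p : ℝ) - 1)⁻¹) := by rw [mul_sum, exp_sum]
    _ ≤ exp (z * (log (log X) + (4 - log (log 2)))) := by gcongr
    _ = exp (z * (4 - log (log 2))) * log X ^ z := by
        rw [rpow_def_of_pos hlogX, ← exp_add]
        ring_nf
end

section
/- Let k ≥ 3 be an integer. If S_1,…,S_k are finite sets, each of cardinality k − 2, such that the pairwise union S_i ∪ S_j is the same set for all pairs 1 ≤ i < j ≤ k, then S_1 = S_2 = ⋯ = S_k. -/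
/-- Lemma 3.1: if `S₁,…,S_k` are `(k-2)`-element sets with the same pairwise union,
then they are all equal. -/
theorem equal_union_forces_equal {α : Type*} [DecidableEq α] (k : ℕ) (hk : 3 ≤ k)
    (S : Fin k → Finset α) (hcard : ∀ i, (S i).card = k - 2)
    (hunion : ∀ i j i' j' : Fin k, i ≠ j → i' ≠ j' → S i ∪ S j = S i' ∪ S j') :
    ∀ i j : Fin k, S i = S j := by
  by_contra hcon
  push_neg at hcon
  obtain ⟨i, j, hne⟩ := hcon
  have hij : i ≠ j := fun h => hne (by rw [h])
  haveI : Nontrivial (Fin k) := Fin.nontrivial_iff_two_le.mpr (by omega)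
  set U := S i ∪ S j with hU
  -- every S l is contained in U
  have hsub : ∀ l, S l ⊆ U := by
    intro l
    obtain ⟨m, hm⟩ := exists_ne l
    have := hunion l m i j (Ne.symm hm) hij
    rw [hU, ← this]
    exact Finset.subset_union_left
  -- each element of U lies in at least k-1 of the sets
  have hcount : ∀ x ∈ U, k - 1 ≤ (Finset.univ.filter (fun l => x ∈ S l)).card := by
    intro x hx
    have hneg : (Finset.univ.filter (fun l => x ∉ S l)).card ≤ 1 := by
      by_contra h
      push_neg at h
      obtain ⟨a, ha, b, hb, hab⟩ := Finset.one_lt_card.mp h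
      simp only [Finset.mem_filter] at ha hb
      have := hunion a b i j hab hij
      rw [hU, ← this] at hx
      rcases Finset.mem_union.mp hx with h' | h'
      · exact ha.2 h'
      · exact hb.2 h'
    have htot := Finset.card_filter_add_card_filter_not
      (s := (Finset.univ : Finset (Fin k))) (p := fun l => x ∈ S l)
    rw [Finset.card_univ, Fintype.card_fin] at htot
    omega
  -- U has at least k-1 elements
  have hUcard : k - 1 ≤ U.card := by
    have hss : S i ⊂ U := by
      refine ⟨Finset.subset_union_left, fun h => ?_⟩
      have hji : S j ⊆ S i := (Finset.union_subset_iff.mp h).2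
      exact hne (Finset.eq_of_subset_of_card_le hji (by rw [hcard, hcard])).symm
    have := Finset.card_lt_card hss
    rw [hcard] at this
    omega
  -- double counting
  have hsum : ∑ l : Fin k, (S l).card = ∑ x ∈ U, (Finset.univ.filter (fun l => x ∈ S l)).card := by
    have h1 : ∀ l, (S l).card = ∑ x ∈ U, if x ∈ S l then 1 else 0 := by
      intro l
      rw [← Finset.card_filter]
      congr 1
      rw [Finset.filter_mem_eq_inter, Finset.inter_eq_right.mpr (hsub l)]
    calc ∑ l : Fin k, (S l).card
        = ∑ l : Fin k, ∑ x ∈ U, if x ∈ S l then 1 else 0 := by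
          exact Finset.sum_congr rfl fun l _ => h1 l
      _ = ∑ x ∈ U, ∑ l : Fin k, if x ∈ S l then 1 else 0 := Finset.sum_comm
      _ = ∑ x ∈ U, (Finset.univ.filter (fun l => x ∈ S l)).card := by
          exact Finset.sum_congr rfl fun x _ => (Finset.card_filter _ _).symm
  have hsum2 : ∑ l : Fin k, (S l).card = k * (k - 2) := by
    simp [hcard, Finset.sum_const, Finset.card_univ]
  have hlow : U.card * (k - 1) ≤ ∑ x ∈ U, (Finset.univ.filter (fun l => x ∈ S l)).card := by
    calc U.card * (k - 1) = ∑ _x ∈ U, (k - 1) := by rw [Finset.sum_const, smul_eq_mul]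
      _ ≤ _ := Finset.sum_le_sum hcount
  rw [← hsum, hsum2] at hlow
  have : (k - 1) * (k - 1) ≤ U.card * (k - 1) :=
    Nat.mul_le_mul_right _ hUcard
  have hfin : (k - 1) * (k - 1) ≤ k * (k - 2) := le_trans this hlow
  nlinarith [Nat.sub_add_cancel (show 1 ≤ k by omega), Nat.sub_add_cancel (show 2 ≤ k by omega)]
end

section
/- Let k ≥ 3 be an integer and let S_1,…,S_k be sets. The pairwise unions S_i ∪ S_j are independent of the pair 1 ≤ i < j ≤ k (i.e. S_i ∪ S_j = S_1 ∪ S_2 for all i < j) if and only if every element belongs to either 0 or at least k − 1 of the sets S_1,…,S_k. -/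
/-- Proposition 5.1: the pairwise unions of `S₁,…,S_k` are independent of the pair
iff every element belongs to either `0` or at least `k-1` of the sets. -/
theorem pairwise_union_characterization {α : Type*} (k : ℕ) (hk : 3 ≤ k)
    (S : Fin k → Set α) :
    (∀ i j i' j' : Fin k, i ≠ j → i' ≠ j' → S i ∪ S j = S i' ∪ S j') ↔
      ∀ x : α, Nat.card {i : Fin k // x ∈ S i} = 0 ∨
        k - 1 ≤ Nat.card {i : Fin k // x ∈ S i} := by
  classical
  have hcard : ∀ x : α, Nat.card {i : Fin k // x ∈ S i}
      = (Finset.univ.filter fun i => x ∈ S i).card := by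
    intro x
    rw [Nat.card_eq_fintype_card, Fintype.card_subtype]
  constructor
  · intro h x
    rw [hcard]
    by_cases h0 : (Finset.univ.filter fun i => x ∈ S i).card = 0
    · exact Or.inl h0
    · right
      -- there is some c with x ∈ S c
      obtain ⟨c, hc⟩ : ∃ c, x ∈ S c := by
        rcases Finset.card_pos.mp (Nat.pos_of_ne_zero h0) with ⟨c, hc⟩
        exact ⟨c, (Finset.mem_filter.mp hc).2⟩
      -- at most one index misses x
      by_contra hlt
      push_neg at hlt
      -- then the complement has ≥ 2 elements
      have hcompl : 2 ≤ (Finset.univ.filter fun i => x ∉ S i).card := by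
        have := Finset.card_filter_add_card_filter_not
          (s := (Finset.univ : Finset (Fin k))) (p := fun i => x ∈ S i)
        simp only [Finset.card_univ, Fintype.card_fin] at this
        omega
      obtain ⟨a, ha, b, hb, hab⟩ := Finset.one_lt_card.mp hcompl
      have hxa := (Finset.mem_filter.mp ha).2
      have hxb := (Finset.mem_filter.mp hb).2
      -- pick d ≠ c
      obtain ⟨d, hd⟩ : ∃ d : Fin k, d ≠ c := by
        have : Nontrivial (Fin k) := Fin.nontrivial_iff_two_le.mpr (by omega)
        exact exists_ne c
      have := h c d a b hd.symm hab
      have hx : x ∈ S a ∪ S b := this ▸ Or.inl hc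
      rcases hx with hx | hx
      · exact hxa hx
      · exact hxb hx
  · intro h i j i' j' hij hij'
    ext x
    rcases h x with h0 | h1
    · rw [hcard] at h0
      have hx : ∀ m : Fin k, x ∉ S m := by
        intro m hm
        have : m ∈ Finset.univ.filter fun i => x ∈ S i := Finset.mem_filter.mpr ⟨Finset.mem_univ _, hm⟩
        simp [Finset.card_eq_zero.mp h0] at this
      simp [hx]
    · rw [hcard] at h1
      have key : ∀ a b : Fin k, a ≠ b → x ∈ S a ∪ S b := by
        intro a b hab
        by_contra hx
        rw [Set.mem_union] at hx
        push_neg at hx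
        have hsub : (Finset.univ.filter fun i => x ∈ S i) ⊆ Finset.univ \ {a, b} := by
          intro m hm
          have hxm := (Finset.mem_filter.mp hm).2
          simp only [Finset.mem_sdiff, Finset.mem_univ, true_and, Finset.mem_insert,
            Finset.mem_singleton]
          rintro (rfl | rfl)
          · exact hx.1 hxm
          · exact hx.2 hxm
        have hle := Finset.card_le_card hsub
        rw [Finset.card_sdiff_of_subset (by simp)] at hle
        rw [Finset.card_insert_of_notMem (by simpa using hab), Finset.card_singleton] at hle
        simp only [Finset.card_univ, Fintype.card_fin] at hle
        omega
      simp only [Set.mem_union] at *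
      constructor
      · intro _; exact key i' j' hij'
      · intro _; exact key i j hij
end

section
/- Let k ≥ 3. Let U be a finite set with a partition U = U_1 ⊔ ⋯ ⊔ U_t ⊔ Ũ. If ℱ ⊆ 2^{[t]} is k-cosunflower-free, then its blow-up B(ℱ, {U_i}_{i=1}^t, Ũ) ⊆ 2^U is also k-cosunflower-free. -/
/-- A family of finite sets is `k`-cosunflower-free: it contains no `k` distinct members
whose pairwise unions all coincide. -/
def CosunflowerFree {α : Type*} [DecidableEq α] (k : ℕ) (𝓕 : Set (Finset α)) : Prop :=
  ¬ ∃ S : Fin k → Finset α, Function.Injective S ∧ (∀ i, S i ∈ 𝓕) ∧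
    ∀ i j i' j' : Fin k, i ≠ j → i' ≠ j' → S i ∪ S j = S i' ∪ S j'

/-- Proposition 5.3: the blow-up of a `k`-cosunflower-free family over a partition
`U = U₁ ⊔ ⋯ ⊔ U_t ⊔ Ũ` is `k`-cosunflower-free. -/
theorem blowup_cosunflowerFree {α : Type*} [DecidableEq α] (k t : ℕ) (hk : 3 ≤ k)
    (U : Finset α) (Ui : Fin t → Finset α) (Ut : Finset α)
    (hdisj : ∀ i j : Fin t, i ≠ j → Disjoint (Ui i) (Ui j))
    (hdisjt : ∀ i : Fin t, Disjoint (Ui i) Ut)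
    (hcover : U = Finset.univ.biUnion Ui ∪ Ut)
    (𝓕 : Set (Finset (Fin t))) (h𝓕 : CosunflowerFree k 𝓕) :
    CosunflowerFree k
      {P : Finset α | ∃ F ∈ 𝓕, P ⊆ U ∧ P ∩ Ut = ∅ ∧
        ∀ i : Fin t, (P ∩ Ui i).card = if i ∈ F then 1 else 0} := by
  rintro ⟨S, hinj, hmem, huni⟩
  choose F hF hsub hUt hcard using hmem
  have hne : ∀ i (l : Fin t), (S i ∩ Ui l).Nonempty ↔ l ∈ F i := by
    intro i l
    rw [← Finset.card_pos, hcard]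
    split <;> simp_all
  have key : ∀ i j : Fin k, i ≠ j → F i = F j →
      ∀ a, a ∈ S i → a ∉ S j → False := by
    intro i j hij hFij a hai haj
    have haU : a ∈ Finset.univ.biUnion Ui ∪ Ut := by rw [← hcover]; exact hsub i hai
    have haUt : a ∉ Ut := by
      intro h
      have : a ∈ S i ∩ Ut := Finset.mem_inter.2 ⟨hai, h⟩
      rw [hUt i] at this
      exact absurd this (Finset.notMem_empty a)
    obtain ⟨l, -, hal⟩ := Finset.mem_biUnion.1 (by
      rcases Finset.mem_union.1 haU with h | h
      · exact h
      · exact absurd h haUt)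
    have hlFi : l ∈ F i := (hne i l).1 ⟨a, Finset.mem_inter.2 ⟨hai, hal⟩⟩
    have hSi : S i ∩ Ui l = {a} := by
      have hc : (S i ∩ Ui l).card = 1 := by rw [hcard]; simp [hlFi]
      obtain ⟨c, hc'⟩ := Finset.card_eq_one.1 hc
      have ha' : a ∈ S i ∩ Ui l := Finset.mem_inter.2 ⟨hai, hal⟩
      rw [hc'] at ha' ⊢
      rw [Finset.mem_singleton] at ha'
      subst ha'; rfl
    have hlFj : l ∈ F j := hFij ▸ hlFi
    have hcj : (S j ∩ Ui l).card = 1 := by rw [hcard]; simp [hlFj]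
    obtain ⟨b, hb⟩ := Finset.card_eq_one.1 hcj
    have hab : a ≠ b := by
      intro h; subst h
      have : a ∈ S j ∩ Ui l := hb ▸ Finset.mem_singleton_self a
      exact haj (Finset.mem_inter.1 this).1
    obtain ⟨m, hmi, hmj⟩ : ∃ m : Fin k, m ≠ i ∧ m ≠ j := by
      by_contra h
      push_neg at h
      have hsub2 : (Finset.univ : Finset (Fin k)) ⊆ {i, j} := by
        intro m _
        simp only [Finset.mem_insert, Finset.mem_singleton]
        by_cases hmi : m = i
        · exact Or.inl hmi
        · exact Or.inr (h m hmi)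
      have h1 := Finset.card_le_card hsub2
      have h2 : ({i, j} : Finset (Fin k)).card ≤ 2 := by
        calc ({i, j} : Finset (Fin k)).card ≤ ({j} : Finset (Fin k)).card + 1 :=
          Finset.card_insert_le i {j}
        _ = 2 := by simp
      simp only [Finset.card_univ, Fintype.card_fin] at h1
      omega
    have hU : S i ∪ S m = S j ∪ S m := huni i m j m (Ne.symm hmi) (Ne.symm hmj)
    have hint : (S i ∩ Ui l) ∪ (S m ∩ Ui l) = (S j ∩ Ui l) ∪ (S m ∩ Ui l) := by
      rw [← Finset.union_inter_distrib_right, ← Finset.union_inter_distrib_right, hU]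
    rw [hSi, hb] at hint
    have haT : a ∈ S m ∩ Ui l := by
      have : a ∈ ({b} : Finset α) ∪ (S m ∩ Ui l) := by
        rw [← hint]; exact Finset.mem_union_left _ (Finset.mem_singleton_self a)
      rcases Finset.mem_union.1 this with h | h
      · exact absurd (Finset.mem_singleton.1 h) hab
      · exact h
    have hbT : b ∈ S m ∩ Ui l := by
      have : b ∈ ({a} : Finset α) ∪ (S m ∩ Ui l) := by
        rw [hint]; exact Finset.mem_union_left _ (Finset.mem_singleton_self b)
      rcases Finset.mem_union.1 this with h | h
      · exact absurd (Finset.mem_singleton.1 h).symm hab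
      · exact h
    have h2 : 2 ≤ (S m ∩ Ui l).card := Finset.one_lt_card.2 ⟨a, haT, b, hbT, hab⟩
    have h1 : (S m ∩ Ui l).card ≤ 1 := by rw [hcard]; split <;> omega
    omega
  by_cases hFinj : Function.Injective F
  · apply h𝓕
    refine ⟨F, hFinj, fun i => hF i, ?_⟩
    intro i j i' j' hij hij'
    ext l
    have key2 : ∀ p q : Fin k, (l ∈ F p ∪ F q ↔ ((S p ∪ S q) ∩ Ui l).Nonempty) := by
      intro p q
      rw [Finset.union_inter_distrib_right]
      constructor
      · intro h
        rcases Finset.mem_union.1 h with h | h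
        · obtain ⟨a, ha⟩ := (hne p l).2 h; exact ⟨a, Finset.mem_union_left _ ha⟩
        · obtain ⟨a, ha⟩ := (hne q l).2 h; exact ⟨a, Finset.mem_union_right _ ha⟩
      · rintro ⟨a, ha⟩
        rcases Finset.mem_union.1 ha with h | h
        · exact Finset.mem_union_left _ ((hne p l).1 ⟨a, h⟩)
        · exact Finset.mem_union_right _ ((hne q l).1 ⟨a, h⟩)
    rw [key2 i j, key2 i' j', huni i j i' j' hij hij']
  · rw [Function.not_injective_iff] at hFinj
    obtain ⟨i, j, hFij, hij⟩ := hFinj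
    have hSij : S i ≠ S j := fun h => hij (hinj h)
    by_cases hss : S i ⊆ S j
    · have : ¬ S j ⊆ S i := fun h => hSij (Finset.Subset.antisymm hss h)
      obtain ⟨a, ha1, ha2⟩ := Finset.not_subset.1 this
      exact key j i (Ne.symm hij) hFij.symm a ha1 ha2
    · obtain ⟨a, ha1, ha2⟩ := Finset.not_subset.1 hss
      exact key i j hij hFij a ha1 ha2
end

section
/- Fix k ≥ 3 and ℓ ≥ 1. Let A be an LCM-k-free set of positive integers and let m be a positive integer. Then the family ℱ_m := { S ⊆ 𝒫(m) : |S| = ℓ and m = a·∏_{p∈S} p for some a ∈ A }, where 𝒫(m) denotes the set of prime divisors of m, is k-sunflower-free. -/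
open Filter

/-- A set of naturals contains an LCM-`k`-tuple: `k` distinct elements all of whose
pairwise least common multiples coincide. -/
def HasLCMTuple (k : ℕ) (A : Set ℕ) : Prop :=
  ∃ a : Fin k → ℕ, Function.Injective a ∧ (∀ i, a i ∈ A) ∧
    ∀ i j i' j' : Fin k, i ≠ j → i' ≠ j' → Nat.lcm (a i) (a j) = Nat.lcm (a i') (a j')

/-- A set of naturals is LCM-`k`-free if it contains no LCM-`k`-tuple. -/
def LCMFree (k : ℕ) (A : Set ℕ) : Prop := ¬ HasLCMTuple k A

/-- A family of finite sets is `k`-sunflower-free: it contains no `k` distinct members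
whose pairwise intersections all coincide. -/
def SunflowerFree {α : Type*} [DecidableEq α] (k : ℕ) (𝓕 : Set (Finset α)) : Prop :=
  ¬ ∃ S : Fin k → Finset α, Function.Injective S ∧ (∀ i, S i ∈ 𝓕) ∧
    ∀ i j i' j' : Fin k, i ≠ j → i' ≠ j' → S i ∩ S j = S i' ∩ S j'

/-! Write `P_S = ∏_{p ∈ S} p`. If `m = a P_S = b P_T` with `S, T` sets of primes, then comparing
`p`-adic valuations gives `lcm(a, b) · P_{S ∩ T} = m`. Hence a `k`-sunflower `S_1, …, S_k` in `ℱ_m`,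
whose pairwise intersections all equal the core `C`, yields witnesses `a_1, …, a_k ∈ A` with
`lcm(a_i, a_j) = m / P_C` for all `i ≠ j`; they are distinct because `P_S` determines `S`. -/

namespace Nat

variable {S T : Finset ℕ}

theorem factorization_prod_primes_apply (hS : ∀ p ∈ S, p.Prime) (q : ℕ) :
    (∏ p ∈ S, p).factorization q = if q ∈ S then 1 else 0 := by
  have hsingle : ∀ p ∈ S, p.factorization q = if p = q then 1 else 0 := fun p hp => by
    rw [(hS p hp).factorization, Finsupp.single_apply]
  rw [factorization_prod fun p hp => (hS p hp).ne_zero, Finsupp.finsetSum_apply,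
    Finset.sum_congr rfl hsingle, Finset.sum_ite_eq']

theorem prod_primes_ne_zero (hS : ∀ p ∈ S, p.Prime) : ∏ p ∈ S, p ≠ 0 :=
  Finset.prod_ne_zero_iff.2 fun p hp => (hS p hp).ne_zero

theorem eq_of_prod_primes_eq (hS : ∀ p ∈ S, p.Prime) (hT : ∀ p ∈ T, p.Prime)
    (h : ∏ p ∈ S, p = ∏ p ∈ T, p) : S = T := by
  rw [← primeFactors_prod hS, ← primeFactors_prod hT, h]

theorem lcm_mul_prod_inter_eq {m a b : ℕ} (hS : ∀ p ∈ S, p.Prime) (hT : ∀ p ∈ T, p.Prime)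
    (hm : m ≠ 0) (ha : m = a * ∏ p ∈ S, p) (hb : m = b * ∏ p ∈ T, p) :
    lcm a b * ∏ p ∈ S ∩ T, p = m := by
  have hST : ∀ p ∈ S ∩ T, p.Prime := fun p hp => hS p (Finset.mem_of_mem_inter_left hp)
  have ha0 : a ≠ 0 := left_ne_zero_of_mul (ha ▸ hm)
  have hb0 : b ≠ 0 := left_ne_zero_of_mul (hb ▸ hm)
  refine eq_of_factorization_eq (mul_ne_zero (lcm_ne_zero ha0 hb0) (prod_primes_ne_zero hST))
    hm fun q => ?_
  have hvala : m.factorization q = a.factorization q + if q ∈ S then 1 else 0 := by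
    rw [ha, factorization_mul ha0 (prod_primes_ne_zero hS), Finsupp.add_apply,
      factorization_prod_primes_apply hS]
  have hvalb : m.factorization q = b.factorization q + if q ∈ T then 1 else 0 := by
    rw [hb, factorization_mul hb0 (prod_primes_ne_zero hT), Finsupp.add_apply,
      factorization_prod_primes_apply hT]
  rw [factorization_mul (lcm_ne_zero ha0 hb0) (prod_primes_ne_zero hST), Finsupp.add_apply,
    factorization_prod_primes_apply hST, factorization_lcm ha0 hb0, Finsupp.sup_apply]
  by_cases hqS : q ∈ S <;> by_cases hqT : q ∈ T <;>
    simp only [Finset.mem_inter, hqS, hqT, and_self, and_true, if_true, if_false,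
      and_false] at hvala hvalb ⊢ <;> omega

end Nat

theorem family_Fm_sunflowerFree_general (k ℓ : ℕ)
    (A : Set ℕ) (hA : LCMFree k A)
    (m : ℕ) (hm : 0 < m) :
    SunflowerFree k
      {S : Finset ℕ | S ⊆ m.primeFactors ∧ S.card = ℓ ∧
        ∃ a ∈ A, m = a * ∏ p ∈ S, p} := by
  rintro ⟨S, hSinj, hSmem, hsun⟩
  choose a haA hma using fun i => (hSmem i).2.2
  have hprime : ∀ i, ∀ p ∈ S i, p.Prime := fun i p hp =>
    Nat.prime_of_mem_primeFactors ((hSmem i).1 hp)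
  have hlcm : ∀ i j, Nat.lcm (a i) (a j) * ∏ p ∈ S i ∩ S j, p = m := fun i j =>
    Nat.lcm_mul_prod_inter_eq (hprime i) (hprime j) hm.ne' (hma i) (hma j)
  refine hA ⟨a, fun i j hij => hSinj ?_, haA, fun i j i' j' hij hij' => ?_⟩
  · have ha0 : a i ≠ 0 := left_ne_zero_of_mul (hma i ▸ hm.ne')
    exact Nat.eq_of_prod_primes_eq (hprime i) (hprime j)
      (Nat.eq_of_mul_eq_mul_left (Nat.pos_of_ne_zero ha0) (by rw [← hma i, hij, hma j]))
  · have hcore : ∏ p ∈ S i ∩ S j, p ≠ 0 :=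
      Nat.prod_primes_ne_zero fun p hp => hprime i p (Finset.mem_of_mem_inter_left hp)
    refine Nat.eq_of_mul_eq_mul_right (Nat.pos_of_ne_zero hcore) ?_
    rw [hlcm, hsun i j i' j' hij hij', hlcm]

/-- Claim 4.1: for an LCM-`k`-free set `A` of positive integers and any positive
integer `m`, the family `ℱ_m` of `ℓ`-element sets `S` of prime divisors of `m` with
`m = a ∏_{p ∈ S} p` for some `a ∈ A` is `k`-sunflower-free. -/
theorem family_Fm_sunflowerFree (k ℓ : ℕ) (hk : 3 ≤ k) (hℓ : 1 ≤ ℓ)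
    (A : Set ℕ) (hApos : ∀ a ∈ A, 0 < a) (hA : LCMFree k A)
    (m : ℕ) (hm : 0 < m) :
    SunflowerFree k
      {S : Finset ℕ | S ⊆ m.primeFactors ∧ S.card = ℓ ∧
        ∃ a ∈ A, m = a * ∏ p ∈ S, p} :=
  family_Fm_sunflowerFree_general k ℓ A hA m hm
end

section
/- Fix k ≥ 3. For all integers n ≥ 1 and t ≥ 1, one has F_k(tn) ≥ (F_k(n)/(n+1))^t. -/
open Filter
/-- `F k n` is the maximal size of a `k`-sunflower-free family of subsets of an `n`-element set. -/
noncomputable def F (k n : ℕ) : ℕ :=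
  sSup {m : ℕ | ∃ 𝓕 : Finset (Finset (Fin n)), SunflowerFree k (↑𝓕 : Set (Finset (Fin n))) ∧ 𝓕.card = m}

/-- The Erdős–Szemerédi `k`-sunflower-free capacity `μ_k^S = limsup F_k(n)^{1/n}`. -/
noncomputable def mu (k : ℕ) : ℝ :=
  limsup (fun n : ℕ => (F k n : ℝ) ^ ((n : ℝ))⁻¹) atTop

/-! ### Auxiliary lemmas -/

lemma Fset_bddAbove (k n : ℕ) :
    BddAbove {m : ℕ | ∃ 𝓕 : Finset (Finset (Fin n)),
      SunflowerFree k (↑𝓕 : Set (Finset (Fin n))) ∧ 𝓕.card = m} := by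
  refine ⟨2 ^ n, ?_⟩
  rintro m ⟨𝓕, -, rfl⟩
  calc 𝓕.card ≤ Fintype.card (Finset (Fin n)) :=
        (Finset.card_le_univ 𝓕).trans_eq Finset.card_univ
    _ = 2 ^ n := by simp [Fintype.card_finset]

lemma sunflowerFree_mono {α : Type*} [DecidableEq α] {k : ℕ} {𝓕 𝓖 : Set (Finset α)}
    (h : SunflowerFree k 𝓕) (hsub : 𝓖 ⊆ 𝓕) : SunflowerFree k 𝓖 := by
  rintro ⟨S, h1, h2, h3⟩
  exact h ⟨S, h1, fun i => hsub (h2 i), h3⟩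

lemma sunflowerFree_empty {α : Type*} [DecidableEq α] {k : ℕ} (hk : 1 ≤ k) :
    SunflowerFree k (↑(∅ : Finset (Finset α)) : Set (Finset α)) := by
  rintro ⟨S, -, hmem, -⟩
  have := hmem (⟨0, hk⟩ : Fin k)
  simpa using this

lemma exists_max_family (k n : ℕ) (hk : 1 ≤ k) :
    ∃ 𝓕 : Finset (Finset (Fin n)), SunflowerFree k (↑𝓕 : Set (Finset (Fin n))) ∧
      𝓕.card = F k n := by
  have h := Nat.sSup_mem (s := {m : ℕ | ∃ 𝓕 : Finset (Finset (Fin n)),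
      SunflowerFree k (↑𝓕 : Set (Finset (Fin n))) ∧ 𝓕.card = m})
    ⟨0, ∅, sunflowerFree_empty hk, by simp⟩ (Fset_bddAbove k n)
  exact h

/-- The block embedding. -/
def blockEmb (t n : ℕ) (b : Fin t) : Fin n ↪ Fin t × Fin n :=
  ⟨fun x => (b, x), fun x y h => by simpa using h⟩

/-- The product (tensor) of a tuple of set families. -/
def Tprod {t n : ℕ} (f : Fin t → Finset (Fin n)) : Finset (Fin t × Fin n) :=
  Finset.univ.biUnion fun b => (f b).map (blockEmb t n b)

lemma mem_Tprod {t n : ℕ} (f : Fin t → Finset (Fin n)) (p : Fin t × Fin n) :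
    p ∈ Tprod f ↔ p.2 ∈ f p.1 := by
  simp only [Tprod, Finset.mem_biUnion, Finset.mem_univ, true_and, Finset.mem_map, blockEmb,
    Function.Embedding.coeFn_mk]
  constructor
  · rintro ⟨b, x, hx, rfl⟩; exact hx
  · intro h; exact ⟨p.1, p.2, h, rfl⟩

lemma Tprod_inter {t n : ℕ} (f g : Fin t → Finset (Fin n)) :
    Tprod f ∩ Tprod g = Tprod (fun b => f b ∩ g b) := by
  ext p; simp [mem_Tprod]

lemma Tprod_injective {t n : ℕ} : Function.Injective (Tprod (t := t) (n := n)) := by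
  intro f g h
  funext b; ext x
  have := Finset.ext_iff.mp h (b, x)
  simpa [mem_Tprod] using this

lemma sunflowerFree_image_map {α β : Type*} [DecidableEq α] [DecidableEq β] (e : α ≃ β)
    {k : ℕ} {𝓕 : Finset (Finset α)} (h : SunflowerFree k (↑𝓕 : Set (Finset α))) :
    SunflowerFree k (↑(𝓕.image (Finset.map e.toEmbedding)) : Set (Finset β)) := by
  rintro ⟨S, hinj, hmem, hcore⟩
  have hmem' : ∀ i, S i ∈ 𝓕.image (Finset.map e.toEmbedding) := fun i => hmem i
  choose A hA hAe using fun i => Finset.mem_image.mp (hmem' i)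
  refine h ⟨A, ?_, fun i => hA i, ?_⟩
  · intro i j hij
    exact hinj (by rw [← hAe i, ← hAe j, hij])
  · intro i j i' j' h1 h2
    apply Finset.map_injective e.toEmbedding
    rw [Finset.map_inter, Finset.map_inter, hAe i, hAe j, hAe i', hAe j']
    exact hcore i j i' j' h1 h2

/-- The tensor-power / supermultiplicativity estimate: `F_k(tn) ≥ (F_k(n)/(n+1))^t`. -/
theorem Fk_tensor_power (k : ℕ) (hk : 3 ≤ k) (n t : ℕ) (hn : 1 ≤ n) (ht : 1 ≤ t) :
    ((F k n : ℝ) / ((n : ℝ) + 1)) ^ t ≤ (F k (t * n) : ℝ) := by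
  have hk1 : 1 ≤ k := by omega
  obtain ⟨𝓕, h𝓕free, h𝓕card⟩ := exists_max_family k n hk1
  -- pigeonhole: a uniform layer of size ≥ F k n / (n+1)
  have hmapsto : ∀ A ∈ 𝓕, A.card ∈ Finset.range (n + 1) := by
    intro A _
    simp only [Finset.mem_range, Nat.lt_succ_iff]
    calc A.card ≤ Fintype.card (Fin n) := (Finset.card_le_univ A).trans_eq Finset.card_univ
      _ = n := Fintype.card_fin n
  obtain ⟨r, hr, hrmax⟩ := Finset.exists_max_image (Finset.range (n + 1))
    (fun r => (𝓕.filter (fun A => A.card = r)).card) ⟨0, by simp⟩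
  set 𝓖 := 𝓕.filter (fun A => A.card = r) with h𝓖
  have hsum : 𝓕.card = ∑ r ∈ Finset.range (n + 1), (𝓕.filter (fun A => A.card = r)).card :=
    Finset.card_eq_sum_card_fiberwise hmapsto
  have hF_le : 𝓕.card ≤ (n + 1) * 𝓖.card := by
    rw [hsum]
    calc ∑ r ∈ Finset.range (n + 1), (𝓕.filter (fun A => A.card = r)).card
        ≤ (Finset.range (n + 1)).card • 𝓖.card :=
          Finset.sum_le_card_nsmul _ _ _ (fun x hx => hrmax x hx)
      _ = (n + 1) * 𝓖.card := by simp [smul_eq_mul]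
  have h𝓖free : SunflowerFree k (↑𝓖 : Set (Finset (Fin n))) :=
    sunflowerFree_mono h𝓕free (by exact_mod_cast Finset.filter_subset _ _)
  have h𝓖unif : ∀ A ∈ 𝓖, A.card = r := fun A hA => (Finset.mem_filter.mp hA).2
  -- the product family
  set 𝓗 : Finset (Finset (Fin t × Fin n)) :=
    (Fintype.piFinset fun _ : Fin t => 𝓖).image Tprod with h𝓗
  have h𝓗card : 𝓗.card = 𝓖.card ^ t := by
    rw [h𝓗, Finset.card_image_of_injective _ Tprod_injective]
    simp [Fintype.card_piFinset]
  have h𝓗free : SunflowerFree k (↑𝓗 : Set (Finset (Fin t × Fin n))) := by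
    rintro ⟨S, hSinj, hSmem, hScore⟩
    have hSmem' : ∀ i, S i ∈ 𝓗 := fun i => hSmem i
    choose g hg hgT using fun i => Finset.mem_image.mp (hSmem' i)
    have hgmem : ∀ i b, g i b ∈ 𝓖 := fun i b => Fintype.mem_piFinset.mp (hg i) b
    have ginj : Function.Injective g := by
      intro i j h
      exact hSinj (by rw [← hgT i, ← hgT j, h])
    have gcore : ∀ b, ∀ i j i' j' : Fin k, i ≠ j → i' ≠ j' →
        g i b ∩ g j b = g i' b ∩ g j' b := by
      intro b i j i' j' hij hij'
      have h := hScore i j i' j' hij hij'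
      rw [← hgT i, ← hgT j, ← hgT i', ← hgT j', Tprod_inter, Tprod_inter] at h
      exact congrFun (Tprod_injective h) b
    have h01 : (⟨0, by omega⟩ : Fin k) ≠ ⟨1, by omega⟩ := by
      intro h; simpa using congrArg Fin.val h
    have hgne : g ⟨0, by omega⟩ ≠ g ⟨1, by omega⟩ := fun h => h01 (ginj h)
    obtain ⟨b, hb⟩ : ∃ b, g ⟨0, by omega⟩ b ≠ g ⟨1, by omega⟩ b := by
      by_contra h; push_neg at h; exact hgne (funext h)
    have hbinj : Function.Injective (fun i => g i b) := by
      intro i j hij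
      by_contra hne
      simp only at hij
      have hall : ∀ m, g m b = g i b := by
        intro m
        by_cases hmi : m = i
        · rw [hmi]
        have h1 : g i b ∩ g m b = g i b := by
          rw [gcore b i m i j (fun h => hmi h.symm) hne, ← hij, Finset.inter_self]
        have hsub : g i b ⊆ g m b := by rw [← h1]; exact Finset.inter_subset_right
        have hc1 : (g i b).card = r := h𝓖unif _ (hgmem i b)
        have hc2 : (g m b).card = r := h𝓖unif _ (hgmem m b)
        exact (Finset.eq_of_subset_of_card_le hsub (by omega)).symm
      exact hb ((hall _).trans (hall _).symm)
    exact h𝓖free ⟨fun i => g i b, hbinj, fun i => hgmem i b,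
      fun i j i' j' h1 h2 => gcore b i j i' j' h1 h2⟩
  -- transfer to Fin (t * n)
  set e : Fin t × Fin n ≃ Fin (t * n) := finProdFinEquiv
  set 𝓗' : Finset (Finset (Fin (t * n))) := 𝓗.image (Finset.map e.toEmbedding) with h𝓗'
  have h𝓗'free : SunflowerFree k (↑𝓗' : Set (Finset (Fin (t * n)))) :=
    sunflowerFree_image_map e h𝓗free
  have h𝓗'card : 𝓗'.card = 𝓖.card ^ t := by
    rw [h𝓗', Finset.card_image_of_injective _ (Finset.map_injective e.toEmbedding), h𝓗card]
  have hle : 𝓖.card ^ t ≤ F k (t * n) := by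
    have : 𝓖.card ^ t ∈ {m : ℕ | ∃ 𝓕 : Finset (Finset (Fin (t * n))),
        SunflowerFree k (↑𝓕 : Set (Finset (Fin (t * n)))) ∧ 𝓕.card = m} :=
      ⟨𝓗', h𝓗'free, h𝓗'card⟩
    exact le_csSup (Fset_bddAbove k (t * n)) this
  -- real arithmetic
  have hpos : (0 : ℝ) < (n : ℝ) + 1 := by positivity
  have h1 : (F k n : ℝ) ≤ ((n : ℝ) + 1) * (𝓖.card : ℝ) := by
    rw [← h𝓕card]
    exact_mod_cast hF_le
  have h2 : (F k n : ℝ) / ((n : ℝ) + 1) ≤ (𝓖.card : ℝ) := by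
    rw [div_le_iff₀ hpos]; linarith
  calc ((F k n : ℝ) / ((n : ℝ) + 1)) ^ t ≤ (𝓖.card : ℝ) ^ t :=
        pow_le_pow_left₀ (by positivity) h2 t
    _ = ((𝓖.card ^ t : ℕ) : ℝ) := by push_cast; ring
    _ ≤ (F k (t * n) : ℝ) := by exact_mod_cast hle
end

section
/- Fix k ≥ 3 and set r := k − 2. Let t ≥ 1 and let P_1,…,P_t be pairwise disjoint finite sets of prime numbers. Then the set A := { ∏_{i=1}^t ∏_{p∈S_i} p : S_i ⊆ P_i with |S_i| = r for each 1 ≤ i ≤ t } of squarefree positive integers is LCM-k-free. -/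
open Filter

lemma key_comb {k r : ℕ} (hk : 3 ≤ k) (hr : r + 2 = k) (S : Fin k → Finset ℕ)
    (hcard : ∀ m, (S m).card = r)
    (hU : ∀ m m' : Fin k, m ≠ m' →
      S m ∪ S m' = S ⟨0, by omega⟩ ∪ S ⟨1, by omega⟩) :
    ∀ m m', S m = S m' := by
  set T := S ⟨0, by omega⟩ ∪ S ⟨1, by omega⟩ with hT
  have hne01 : (⟨0, by omega⟩ : Fin k) ≠ ⟨1, by omega⟩ := by
    simp [Fin.ext_iff]
  have hsub : ∀ m, S m ⊆ T := by
    intro m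
    rcases eq_or_ne m ⟨0, by omega⟩ with h | h
    · rw [h]; exact Finset.subset_union_left
    · exact (hU m ⟨0, by omega⟩ h) ▸ Finset.subset_union_left
  by_cases hle : T.card ≤ r
  · have hall : ∀ m, S m = T := fun m =>
      Finset.eq_of_subset_of_card_le (hsub m) (by rw [hcard]; exact hle)
    intro m m'; rw [hall m, hall m']
  · exfalso
    push_neg at hle
    set M : Fin k → Finset ℕ := fun m => T \ S m with hM
    have hMcard : ∀ m, (M m).card = T.card - r := fun m => by
      rw [hM]; simp only []
      rw [Finset.card_sdiff_of_subset (hsub m), hcard]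
    have hdis : ∀ m ∈ Finset.univ, ∀ m' ∈ Finset.univ,
        m ≠ m' → Disjoint (M m) (M m') := by
      intro m _ m' _ hne
      rw [Finset.disjoint_left]
      intro q hq hq'
      have hqT : q ∈ T := (Finset.mem_sdiff.mp hq).1
      rw [← hU m m' hne] at hqT
      rcases Finset.mem_union.mp hqT with h | h
      · exact (Finset.mem_sdiff.mp hq).2 h
      · exact (Finset.mem_sdiff.mp hq').2 h
    have hsum : ∑ m : Fin k, (M m).card ≤ T.card := by
      rw [← Finset.card_biUnion hdis]
      apply Finset.card_le_card
      intro q hq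
      rcases Finset.mem_biUnion.mp hq with ⟨m, _, hm⟩
      exact (Finset.mem_sdiff.mp hm).1
    have h1 : k * (T.card - r) ≤ T.card := by
      calc k * (T.card - r) = ∑ _m : Fin k, (T.card - r) := by
            simp [Finset.sum_const, Finset.card_univ, mul_comm]
        _ = ∑ m : Fin k, (M m).card := by
            exact Finset.sum_congr rfl fun m _ => (hMcard m).symm
        _ ≤ T.card := hsum
    set d := T.card - r with hd
    have hd1 : 1 ≤ d := by omega
    have hcd : T.card = r + d := by omega
    rw [hcd, ← hr] at h1
    have hexp : (r + 2) * d = r * d + 2 * d := by ring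
    have hrd : r * 1 ≤ r * d := Nat.mul_le_mul_left r hd1
    rw [mul_one] at hrd
    -- (r+2)*d ≤ r + d, r ≤ r*d, 1 ≤ d : contradiction
    linarith

lemma mem_iff_dvd {t : ℕ} (P : Fin t → Finset ℕ) (hprime : ∀ i, ∀ p ∈ P i, p.Prime)
    (hdisj : ∀ i j : Fin t, i ≠ j → Disjoint (P i) (P j))
    (S : Fin t → Finset ℕ) (hS : ∀ i, S i ⊆ P i)
    (i : Fin t) (q : ℕ) (hq : q ∈ P i) :
    q ∣ ∏ j, ∏ p ∈ S j, p ↔ q ∈ S i := by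
  have hqp : q.Prime := hprime i q hq
  constructor
  · intro h
    rcases (Prime.dvd_finset_prod_iff hqp.prime _).mp h with ⟨j, _, hj⟩
    rcases (Prime.dvd_finset_prod_iff hqp.prime _).mp hj with ⟨p, hp, hdvd⟩
    have hqep : q = p :=
      (Nat.prime_dvd_prime_iff_eq hqp (hprime j p (hS j hp))).mp hdvd
    subst hqep
    rcases eq_or_ne i j with rfl | hne
    · exact hp
    · exact absurd (hS j hp) (Finset.disjoint_left.mp (hdisj i j hne) hq)
  · intro h
    exact dvd_trans (Finset.dvd_prod_of_mem _ h)
      (Finset.dvd_prod_of_mem _ (Finset.mem_univ i))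

/-- The bucketed construction of Section 3: products of exactly `k-2` primes chosen
from each of `t` pairwise disjoint finite sets of primes form an LCM-`k`-free set. -/
theorem bucket_construction_LCMFree (k : ℕ) (hk : 3 ≤ k) (t : ℕ) (ht : 1 ≤ t)
    (P : Fin t → Finset ℕ) (hprime : ∀ i, ∀ p ∈ P i, p.Prime)
    (hdisj : ∀ i j : Fin t, i ≠ j → Disjoint (P i) (P j)) :
    LCMFree k
      {n : ℕ | ∃ S : Fin t → Finset ℕ,
        (∀ i, S i ⊆ P i ∧ (S i).card = k - 2) ∧ n = ∏ i, ∏ p ∈ S i, p} := by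
  rintro ⟨a, hinj, hmem, hlcm⟩
  simp only [Set.mem_setOf_eq] at hmem
  choose S hS hval using hmem
  set m0 : Fin k := ⟨0, by omega⟩ with hm0
  set m1 : Fin k := ⟨1, by omega⟩ with hm1
  have hne01 : m0 ≠ m1 := by simp [hm0, hm1, Fin.ext_iff]
  have hdvdmem : ∀ (m : Fin k) (i : Fin t) (q : ℕ), q ∈ P i →
      (q ∣ a m ↔ q ∈ S m i) := by
    intro m i q hq
    rw [hval m]
    exact mem_iff_dvd P hprime hdisj (S m) (fun j => (hS m j).1) i q hq
  have hU : ∀ (i : Fin t) (m m' : Fin k), m ≠ m' →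
      S m i ∪ S m' i = S m0 i ∪ S m1 i := by
    intro i m m' hne
    have key : ∀ (n n' : Fin k), n ≠ n' → ∀ q,
        (q ∈ S n i ∪ S n' i ↔ q ∈ P i ∧ q ∣ Nat.lcm (a m0) (a m1)) := by
      intro n n' hnn q
      rw [← hlcm n n' m0 m1 hnn hne01]
      constructor
      · intro hqm
        rcases Finset.mem_union.mp hqm with h | h
        · have hqP : q ∈ P i := (hS n i).1 h
          exact ⟨hqP, dvd_trans ((hdvdmem n i q hqP).mpr h) (Nat.dvd_lcm_left _ _)⟩
        · have hqP : q ∈ P i := (hS n' i).1 h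
          exact ⟨hqP, dvd_trans ((hdvdmem n' i q hqP).mpr h) (Nat.dvd_lcm_right _ _)⟩
      · rintro ⟨hqP, hdv⟩
        have hqp : q.Prime := hprime i q hqP
        have hmul : q ∣ a n * a n' := hdv.trans (Nat.lcm_dvd_mul _ _)
        rcases (Nat.Prime.dvd_mul hqp).mp hmul with h | h
        · exact Finset.mem_union_left _ ((hdvdmem n i q hqP).mp h)
        · exact Finset.mem_union_right _ ((hdvdmem n' i q hqP).mp h)
    ext q
    rw [key m m' hne q, key m0 m1 hne01 q]
  have hSeq : ∀ (i : Fin t) (m m' : Fin k), S m i = S m' i := by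
    intro i
    exact key_comb hk (by omega) (fun m => S m i) (fun m => (hS m i).2)
      (fun m m' hne => hU i m m' hne)
  have haeq : a m0 = a m1 := by
    rw [hval m0, hval m1]
    exact Finset.prod_congr rfl fun i _ => by rw [hSeq i m0 m1]
  exact hne01 (hinj haeq)
end

section
/- Fix k ≥ 3 and integers N ≥ 1 and ℓ ≥ 1. Let A ⊆ {1,…,N} be LCM-k-free. Then (∑_{a∈A} 1/a) · (∑_{n ≤ N, ω(n) = Ω(n) = ℓ} 1/n) ≤ ∑_{m ≤ N²} F_k(ω(m))/m, where the last sum is over positive integers m ≤ N². -/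
open Filter
lemma card_le_F {k : ℕ} (t : Finset ℕ) (𝓖 : Finset (Finset ℕ))
    (hsub : ∀ S ∈ 𝓖, S ⊆ t) (hsf : SunflowerFree k (↑𝓖 : Set (Finset ℕ))) :
    𝓖.card ≤ F k t.card := by
  classical
  let e := t.equivFin
  let Φ : Finset ℕ → Finset (Fin t.card) :=
    fun S => (Finset.filter (fun x : {y // y ∈ t} => (x : ℕ) ∈ S) t.attach).image e
  have hΦmem : ∀ (S : Finset ℕ) (p : ℕ) (hp : p ∈ t), (e ⟨p, hp⟩ ∈ Φ S ↔ p ∈ S) := by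
    intro S p hp
    constructor
    · intro h
      simp only [Φ, Finset.mem_image, Finset.mem_filter] at h
      obtain ⟨x, ⟨-, hxS⟩, hxe⟩ := h
      have : x = ⟨p, hp⟩ := e.injective hxe
      rwa [this] at hxS
    · intro h
      simp only [Φ, Finset.mem_image]
      exact ⟨⟨p, hp⟩, Finset.mem_filter.mpr ⟨Finset.mem_attach _ _, h⟩, rfl⟩
  have hΦinter : ∀ S T : Finset ℕ, Φ (S ∩ T) = Φ S ∩ Φ T := by
    intro S T
    show (Finset.filter _ t.attach).image e =
      (Finset.filter _ t.attach).image e ∩ (Finset.filter _ t.attach).image e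
    rw [← Finset.image_inter _ _ e.injective, ← Finset.filter_and]
    congr 1
    ext x
    simp
  have hΦinj : ∀ S T : Finset ℕ, S ⊆ t → T ⊆ t → Φ S = Φ T → S = T := by
    intro S T hS hT h
    ext p
    constructor
    · intro hp
      have hpt := hS hp
      have h2 := (hΦmem S p hpt).mpr hp
      rw [h] at h2
      exact (hΦmem T p hpt).mp h2
    · intro hp
      have hpt := hT hp
      have h2 := (hΦmem T p hpt).mpr hp
      rw [← h] at h2
      exact (hΦmem S p hpt).mp h2
  have hcard : (𝓖.image Φ).card = 𝓖.card :=
    Finset.card_image_of_injOn fun S hS T hT h => hΦinj S T (hsub S hS) (hsub T hT) h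
  have hsf' : SunflowerFree k (↑(𝓖.image Φ) : Set (Finset (Fin t.card))) := by
    rintro ⟨S, Sinj, Smem, Sint⟩
    have hT : ∀ i, ∃ T, T ∈ 𝓖 ∧ Φ T = S i := by
      intro i
      have := Smem i
      simpa [Finset.mem_image] using this
    choose T hTmem hTΦ using hT
    refine hsf ⟨T, ?_, fun i => hTmem i, ?_⟩
    · intro i j hij
      apply Sinj
      rw [← hTΦ i, ← hTΦ j, hij]
    · intro i j i' j' hij hij'
      apply hΦinj _ _ (Finset.inter_subset_left.trans (hsub _ (hTmem i)))
        (Finset.inter_subset_left.trans (hsub _ (hTmem i')))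
      rw [hΦinter, hΦinter, hTΦ i, hTΦ j, hTΦ i', hTΦ j']
      exact Sint i j i' j' hij hij'
  have hbdd : BddAbove {m : ℕ | ∃ 𝓕 : Finset (Finset (Fin t.card)),
      SunflowerFree k (↑𝓕 : Set (Finset (Fin t.card))) ∧ 𝓕.card = m} := by
    refine ⟨Fintype.card (Finset (Fin t.card)), ?_⟩
    rintro m ⟨𝓕, -, rfl⟩
    exact Finset.card_le_univ 𝓕
  calc 𝓖.card = (𝓖.image Φ).card := hcard.symm
    _ ≤ F k t.card := le_csSup hbdd ⟨𝓖.image Φ, hsf', rfl⟩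

lemma lcm_mul_gcd_eq {m a a' n n' : ℕ} (hn : 0 < n) (hn' : 0 < n')
    (h : a * n = m) (h' : a' * n' = m) :
    Nat.lcm a a' * Nat.gcd n n' = m := by
  obtain ⟨d, u, v, hd0, hnu, hnv, hcop⟩ :
      ∃ d u v, 0 < d ∧ d * u = n ∧ d * v = n' ∧ Nat.Coprime u v :=
    ⟨Nat.gcd n n', n / Nat.gcd n n', n' / Nat.gcd n n',
      Nat.gcd_pos_of_pos_left _ hn, Nat.mul_div_cancel' (Nat.gcd_dvd_left n n'),
      Nat.mul_div_cancel' (Nat.gcd_dvd_right n n'),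
      Nat.coprime_div_gcd_div_gcd (Nat.gcd_pos_of_pos_left _ hn)⟩
  have hgcd : Nat.gcd n n' = d := by
    rw [← hnu, ← hnv, Nat.gcd_mul_left, Nat.Coprime.gcd_eq_one hcop, mul_one]
  have h1 : Nat.gcd n n' * Nat.lcm n n' = d * (d * u * v) := by
    rw [Nat.gcd_mul_lcm]
    rw [← hnu, ← hnv]; ring
  rw [hgcd] at h1
  have hlcm : Nat.lcm n n' = d * u * v := Nat.eq_of_mul_eq_mul_left hd0 h1
  have hLdvd : Nat.lcm n n' ∣ m :=
    Nat.lcm_dvd ⟨a, by rw [← h]; ring⟩ ⟨a', by rw [← h']; ring⟩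
  obtain ⟨w, hmw⟩ := hLdvd
  have hm2 : m = d * u * v * w := by rw [hmw, hlcm]
  have ha : a = v * w := by
    have h3 : a * n = (v * w) * n := by rw [h, ← hnu, hm2]; ring
    exact Nat.eq_of_mul_eq_mul_right hn h3
  have ha' : a' = u * w := by
    have h3 : a' * n' = (u * w) * n' := by rw [h', ← hnv, hm2]; ring
    exact Nat.eq_of_mul_eq_mul_right hn' h3
  rw [ha, ha', hgcd, Nat.lcm_mul_right, Nat.Coprime.lcm_eq_mul hcop.symm, hm2]
  ring

lemma squarefree_of_counts {n ℓ : ℕ} (hn : 0 < n)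
    (h1 : n.primeFactors.card = ℓ) (h2 : n.primeFactorsList.length = ℓ) :
    Squarefree n := by
  rw [Nat.squarefree_iff_nodup_primeFactorsList hn.ne']
  have hdl : n.primeFactorsList.dedup.length = n.primeFactorsList.length := by
    rw [h2, ← h1, ← Nat.toFinset_factors, List.card_toFinset]
  have hself : n.primeFactorsList.dedup = n.primeFactorsList :=
    (List.dedup_sublist _).eq_of_length hdl
  rw [← hself]
  exact List.nodup_dedup _


/-- The double-counting inequality from the proof of Theorem 1.4:
`(∑_{a∈A} 1/a) · H_ℓ(N) ≤ ∑_{m ≤ N²} F_k(ω(m))/m` for every LCM-`k`-free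
`A ⊆ {1,…,N}`. -/
theorem double_counting_inequality (k N ℓ : ℕ) (hk : 3 ≤ k) (hN : 1 ≤ N) (hℓ : 1 ≤ ℓ)
    (A : Finset ℕ) (hsub : ∀ a ∈ A, a ∈ Finset.Icc 1 N)
    (hA : LCMFree k (↑A : Set ℕ)) :
    (∑ a ∈ A, (1 : ℝ) / a) *
        (∑ n ∈ (Finset.Icc 1 N).filter
            (fun n => n.primeFactors.card = ℓ ∧ n.primeFactorsList.length = ℓ),
          (1 : ℝ) / n)
      ≤ ∑ m ∈ Finset.Icc 1 (N ^ 2), (F k m.primeFactors.card : ℝ) / m := by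
  classical
  set B := (Finset.Icc 1 N).filter
      (fun n => n.primeFactors.card = ℓ ∧ n.primeFactorsList.length = ℓ) with hBdef
  have hBpos : ∀ n ∈ B, 0 < n := fun n hn =>
    (Finset.mem_Icc.mp (Finset.mem_filter.mp hn).1).1
  have hBle : ∀ n ∈ B, n ≤ N := fun n hn =>
    (Finset.mem_Icc.mp (Finset.mem_filter.mp hn).1).2
  have hBsf : ∀ n ∈ B, Squarefree n := fun n hn =>
    squarefree_of_counts (hBpos n hn) (Finset.mem_filter.mp hn).2.1
      (Finset.mem_filter.mp hn).2.2
  have hApos : ∀ a ∈ A, 0 < a := fun a ha => (Finset.mem_Icc.mp (hsub a ha)).1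
  have hAle : ∀ a ∈ A, a ≤ N := fun a ha => (Finset.mem_Icc.mp (hsub a ha)).2
  rw [Finset.sum_mul_sum]
  have step1 : ∑ a ∈ A, ∑ n ∈ B, (1 : ℝ) / a * (1 / n)
      = ∑ p ∈ A ×ˢ B, (1 : ℝ) / (p.1 * p.2 : ℕ) := by
    rw [Finset.sum_product]
    refine Finset.sum_congr rfl fun a _ => Finset.sum_congr rfl fun n _ => ?_
    rw [div_mul_div_comm, one_mul, Nat.cast_mul]
  rw [step1]
  have hmaps : ∀ p ∈ A ×ˢ B, p.1 * p.2 ∈ Finset.Icc 1 (N ^ 2) := by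
    rintro ⟨a, n⟩ hp
    rw [Finset.mem_product] at hp
    rw [Finset.mem_Icc]
    constructor
    · exact Nat.one_le_iff_ne_zero.mpr (Nat.mul_ne_zero (hApos a hp.1).ne' (hBpos n hp.2).ne')
    · rw [pow_two]; exact Nat.mul_le_mul (hAle a hp.1) (hBle n hp.2)
  rw [← Finset.sum_fiberwise_of_maps_to hmaps (fun p => (1 : ℝ) / (p.1 * p.2 : ℕ))]
  refine Finset.sum_le_sum fun m hm => ?_
  have hm1 : 1 ≤ m := (Finset.mem_Icc.mp hm).1
  have hm0 : (0:ℕ) < m := hm1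
  set P := (A ×ˢ B).filter (fun p : ℕ × ℕ => p.1 * p.2 = m) with hPdef
  have hPfacts : ∀ p ∈ P, p.1 ∈ A ∧ p.2 ∈ B ∧ p.1 * p.2 = m := by
    intro p hp
    rw [hPdef, Finset.mem_filter, Finset.mem_product] at hp
    exact ⟨hp.1.1, hp.1.2, hp.2⟩
  -- rewrite inner sum as card * 1/m
  have hsum : ∑ p ∈ P, (1 : ℝ) / (p.1 * p.2 : ℕ) = (P.card : ℝ) * (1 / m) := by
    rw [Finset.sum_congr rfl (fun p hp => by rw [(hPfacts p hp).2.2]), Finset.sum_const,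
      nsmul_eq_mul]
  rw [hsum]
  -- the key cardinality bound
  have hψinj : Set.InjOn (fun p : ℕ × ℕ => p.2.primeFactors) ↑P := by
    intro p hp q hq hψ
    obtain ⟨hpA, hpB, hpm⟩ := hPfacts p (by exact_mod_cast hp)
    obtain ⟨hqA, hqB, hqm⟩ := hPfacts q (by exact_mod_cast hq)
    have h2 : p.2 = q.2 := by
      rw [← Nat.prod_primeFactors_of_squarefree (hBsf _ hpB),
        ← Nat.prod_primeFactors_of_squarefree (hBsf _ hqB)]
      simp only at hψ
      rw [hψ]
    have h1 : p.1 = q.1 := by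
      apply Nat.eq_of_mul_eq_mul_right (hBpos _ hpB)
      rw [hpm, h2, hqm]
    exact Prod.ext h1 h2
  have hcard : P.card ≤ F k m.primeFactors.card := by
    have himg : (P.image (fun p : ℕ × ℕ => p.2.primeFactors)).card = P.card :=
      Finset.card_image_of_injOn hψinj
    rw [← himg]
    apply card_le_F
    · intro S hS
      obtain ⟨p, hp, rfl⟩ := Finset.mem_image.mp hS
      obtain ⟨-, hpB, hpm⟩ := hPfacts p hp
      exact Nat.primeFactors_mono ⟨p.1, by rw [← hpm]; ring⟩ hm0.ne'
    · rintro ⟨S, Sinj, Smem, Sint⟩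
      have hex : ∀ i, ∃ p, p ∈ P ∧ p.2.primeFactors = S i := by
        intro i
        have := Smem i
        simpa [Finset.mem_image] using this
      choose p hpP hpψ using hex
      have hfacts := fun i => hPfacts (p i) (hpP i)
      -- the gcd identity
      have hgcd : ∀ i j, Nat.gcd (p i).2 (p j).2 = ∏ q ∈ S i ∩ S j, q := by
        intro i j
        have hsf : Squarefree (Nat.gcd (p i).2 (p j).2) :=
          (hBsf _ (hfacts i).2.1).squarefree_of_dvd (Nat.gcd_dvd_left _ _)
        rw [← Nat.prod_primeFactors_of_squarefree hsf,
          Nat.primeFactors_gcd (hBpos _ (hfacts i).2.1).ne' (hBpos _ (hfacts j).2.1).ne',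
          hpψ i, hpψ j]
      have hkey : ∀ i j, Nat.lcm (p i).1 (p j).1 * (∏ q ∈ S i ∩ S j, q) = m := by
        intro i j
        rw [← hgcd i j]
        exact lcm_mul_gcd_eq (hBpos _ (hfacts i).2.1) (hBpos _ (hfacts j).2.1)
          (hfacts i).2.2 (hfacts j).2.2
      have hprodpos : ∀ i j, 0 < ∏ q ∈ S i ∩ S j, q := by
        intro i j
        rw [← hgcd i j]
        exact Nat.gcd_pos_of_pos_left _ (hBpos _ (hfacts i).2.1)
      refine hA ⟨fun i => (p i).1, ?_, fun i => (hfacts i).1, ?_⟩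
      · intro i j hij
        simp only at hij
        have h2 : (p i).2 = (p j).2 := by
          apply Nat.eq_of_mul_eq_mul_left (hApos _ (hfacts i).1)
          rw [(hfacts i).2.2, hij, (hfacts j).2.2]
        apply Sinj
        rw [← hpψ i, ← hpψ j, h2]
      · intro i j i' j' hij hij'
        apply Nat.eq_of_mul_eq_mul_right (hprodpos i j)
        rw [hkey i j]
        rw [Sint i j i' j' hij hij', hkey i' j']
  -- conclude
  rw [mul_one_div]
  gcongr
end
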